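/- arXiv:1706.08351 — 6 statements merged into one kernel-verified Lean document; each statement's English description precedes it below -/
import Mathlib

section
/- If s > 1 is an integer with 2^ℓ exactly dividing s−1 for some ℓ > 1, and x > 0 is an integer with 2^u exactly dividing x for some u > 0, then 1 + s + s^2 + ... + s^{x−1} ≡ (1 + 2^{ℓ−1})·x (mod 2^{ℓ+u}). -/
/-!
With `G n = 1 + s + ⋯ + s^(n-1)`, the identity `G (2n) = 2 G n + (G n)² (s - 1)` lets one build
`x = 2^u y` by doubling `u` times. Since `s ≡ 1 [ZMOD 2^ℓ]` we start from `G y ≡ y [ZMOD 2^ℓ]`.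
At the first doubling the square term contributes `y² (s - 1) ≡ 2^ℓ y [ZMOD 2^(ℓ+1)]`, because
`(s - 1) / 2^ℓ` is odd; this is the source of the factor `1 + 2^(ℓ-1)`. At every later doubling
`2^u ∣ G n` and `2^ℓ ∣ s - 1`, so the square term vanishes modulo `2^(ℓ+u+1)` and the
congruence is simply doubled.
-/

open Finset

theorem geom_sum_two_mul {R : Type*} [CommRing R] (s : R) (n : ℕ) :
    ∑ i ∈ range (2 * n), s ^ i =
      2 * ∑ i ∈ range n, s ^ i + (∑ i ∈ range n, s ^ i) ^ 2 * (s - 1) := by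
  rw [two_mul, sum_range_add, sq, mul_assoc, geom_sum_mul]
  simp_rw [pow_add, ← mul_sum]
  ring

namespace Int.ModEq

theorem geom_sum {n s : ℤ} (h : s ≡ 1 [ZMOD n]) (x : ℕ) :
    ∑ i ∈ Finset.range x, s ^ i ≡ x [ZMOD n] := by
  have := Int.ModEq.sum (s := Finset.range x) fun i _ => (h.pow i).trans (by rw [one_pow])
  rwa [Finset.sum_const, Finset.card_range, nsmul_one] at this

theorem two_mul_add_sq_mul {A a d : ℤ} {j : ℕ} (h : A ≡ a [ZMOD 2 ^ j]) (hd : 2 ∣ d) :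
    2 * A + A ^ 2 * d ≡ 2 * a + a ^ 2 * d [ZMOD 2 ^ (j + 1)] := by
  obtain ⟨c, hc⟩ := Int.modEq_iff_dvd.mp h
  obtain ⟨e, rfl⟩ := hd
  refine Int.modEq_iff_dvd.mpr ⟨c + c * (a + A) * e, ?_⟩
  linear_combination (2 + 2 * (a + A) * e) * hc

end Int.ModEq

section
variable {s m : ℤ} {k : ℕ}

theorem geom_sum_two_mul_modEq (hs : s - 1 = 2 ^ (k + 1) * m) (hm : Odd m) (y : ℕ) :
    ∑ i ∈ range (2 * y), s ^ i ≡ (1 + 2 ^ k) * (2 * y : ℕ) [ZMOD 2 ^ (k + 2)] := by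
  have hs' : s ≡ 1 [ZMOD 2 ^ (k + 1)] := (Int.modEq_iff_dvd.mpr (hs ▸ dvd_mul_right _ _)).symm
  have hparity : 2 ∣ (y : ℤ) - y ^ 2 * m := by
    rw [← even_iff_two_dvd]
    simp [Int.even_sub, Int.even_mul, parity_simps, Int.not_even_iff_odd.mpr hm]
  rw [geom_sum_two_mul]
  have h2 : 2 ∣ s - 1 := hs ▸ (dvd_pow_self 2 k.succ_ne_zero).mul_right m
  refine ((hs'.geom_sum y).two_mul_add_sq_mul h2).trans ?_
  obtain ⟨t, ht⟩ := hparity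
  refine Int.modEq_iff_dvd.mpr ⟨t, ?_⟩
  push_cast
  linear_combination (2 : ℤ) ^ (k + 1) * ht - (y : ℤ) ^ 2 * hs

theorem geom_sum_two_pow_mul_modEq (hs : s - 1 = 2 ^ (k + 1) * m) (hm : Odd m) (y n : ℕ) :
    ∑ i ∈ range (2 ^ (n + 1) * y), s ^ i ≡
      (1 + 2 ^ k) * (2 ^ (n + 1) * y : ℕ) [ZMOD 2 ^ (k + 1 + (n + 1))] := by
  induction n with
  | zero => simpa using geom_sum_two_mul_modEq hs hm y
  | succ n ih =>
    have hsq : ((1 + 2 ^ k) * (2 ^ (n + 1) * y : ℕ) : ℤ) ^ 2 * (s - 1) ≡ 0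
        [ZMOD 2 ^ (k + 1 + (n + 2))] :=
      Dvd.dvd.modEq_zero_int ⟨(1 + 2 ^ k) ^ 2 * 2 ^ n * y ^ 2 * m, by rw [hs]; push_cast; ring⟩
    rw [pow_succ, mul_comm _ 2, mul_assoc, geom_sum_two_mul,
      show ((1 + 2 ^ k) * (2 * (2 ^ (n + 1) * y) : ℕ) : ℤ) =
        2 * ((1 + 2 ^ k) * (2 ^ (n + 1) * y : ℕ)) + 0 by push_cast; ring]
    have h2 : 2 ∣ s - 1 := hs ▸ (dvd_pow_self 2 k.succ_ne_zero).mul_right m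
    exact (ih.two_mul_add_sq_mul h2).trans (hsq.add_left _)

end

theorem geom_sum_congr_general (s : ℤ) (x : ℕ) (ℓ u : ℕ) (hℓ : 1 < ℓ)
    (hsdvd : (2 : ℤ) ^ ℓ ∣ s - 1) (hsndvd : ¬ (2 : ℤ) ^ (ℓ + 1) ∣ s - 1)
    (hu : 0 < u)
    (hxdvd : (2 : ℤ) ^ u ∣ (x : ℤ)) :
    (∑ i ∈ Finset.range x, s ^ i) ≡ (1 + 2 ^ (ℓ - 1)) * (x : ℤ) [ZMOD 2 ^ (ℓ + u)] := by
  obtain ⟨k, rfl⟩ : ∃ k, ℓ = k + 1 := ⟨ℓ - 1, by omega⟩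
  obtain ⟨n, rfl⟩ : ∃ n, u = n + 1 := ⟨u - 1, by omega⟩
  obtain ⟨m, hm⟩ := hsdvd
  have hm_odd : Odd m := by
    rw [hm, pow_succ, mul_dvd_mul_iff_left (by positivity)] at hsndvd
    exact Int.not_even_iff_odd.mp fun h => hsndvd h.two_dvd
  obtain ⟨y, rfl⟩ : 2 ^ (n + 1) ∣ x := by exact_mod_cast hxdvd
  exact geom_sum_two_pow_mul_modEq hm hm_odd y n

/-- Lemma 2.1 (first part): if `2^ℓ` exactly divides `s - 1` (with `ℓ > 1`) and `2^u`
exactly divides `x` (with `u > 0`), then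
`[x; s] = 1 + s + ⋯ + s^(x-1) ≡ (1 + 2^(ℓ-1)) * x (mod 2^(ℓ+u))`. -/
theorem geom_sum_congr (s : ℤ) (x : ℕ) (ℓ u : ℕ) (hs : 1 < s) (hℓ : 1 < ℓ)
    (hsdvd : (2 : ℤ) ^ ℓ ∣ s - 1) (hsndvd : ¬ (2 : ℤ) ^ (ℓ + 1) ∣ s - 1)
    (hx : 0 < x) (hu : 0 < u)
    (hxdvd : (2 : ℤ) ^ u ∣ (x : ℤ)) (hxndvd : ¬ (2 : ℤ) ^ (u + 1) ∣ (x : ℤ)) :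
    (∑ i ∈ Finset.range x, s ^ i) ≡ (1 + 2 ^ (ℓ - 1)) * (x : ℤ) [ZMOD 2 ^ (ℓ + u)] :=
  geom_sum_congr_general s x ℓ u hℓ hsdvd hsndvd hu hxdvd
end

section
/- If s > 1 is an integer with 2^ℓ exactly dividing s−1 for some ℓ > 1, and x > 0 is an integer with 2^u exactly dividing x for some u > 0, then s^x − 1 ≡ (s − 1 + 2^{2ℓ−1})·x (mod 2^{2ℓ+u}). -/
private lemma binom2 (b : ℤ) (n : ℕ) : (b - 1)^2 ∣ b^n - 1 - n * (b - 1) := by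
  induction n with
  | zero => simp
  | succ n ih =>
    have h : b^(n+1) - 1 - ((n+1 : ℕ) : ℤ) * (b - 1)
        = b * (b^n - 1 - n * (b - 1)) + n * (b - 1)^2 := by push_cast; ring
    rw [h]
    exact dvd_add (ih.mul_left b) (dvd_mul_left _ _)

/-- Lemma 2.1 (second part): if `2^ℓ` exactly divides `s - 1` (with `ℓ > 1`) and `2^u`
exactly divides `x` (with `u > 0`), then
`s^x - 1 ≡ (s - 1 + 2^(2ℓ-1)) * x (mod 2^(2ℓ+u))`. -/
theorem pow_sub_one_congr (s : ℤ) (x : ℕ) (ℓ u : ℕ) (hs : 1 < s) (hℓ : 1 < ℓ)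
    (hsdvd : (2 : ℤ) ^ ℓ ∣ s - 1) (hsndvd : ¬ (2 : ℤ) ^ (ℓ + 1) ∣ s - 1)
    (hx : 0 < x) (hu : 0 < u)
    (hxdvd : (2 : ℤ) ^ u ∣ (x : ℤ)) (hxndvd : ¬ (2 : ℤ) ^ (u + 1) ∣ (x : ℤ)) :
    s ^ x - 1 ≡ (s - 1 + 2 ^ (2 * ℓ - 1)) * (x : ℤ) [ZMOD 2 ^ (2 * ℓ + u)] := by
  obtain ⟨a, rfl⟩ : ∃ a, ℓ = a + 2 := ⟨ℓ - 2, by omega⟩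
  obtain ⟨v, rfl⟩ : ∃ v, u = v + 1 := ⟨u - 1, by omega⟩
  obtain ⟨m, hm⟩ := hsdvd
  have hmodd : m % 2 = 1 := by
    rcases Int.even_or_odd m with ⟨k, hk⟩ | h
    · exfalso; apply hsndvd
      exact ⟨k, by rw [hm, hk, pow_succ]; ring⟩
    · obtain ⟨j, hj⟩ := h; omega
  obtain ⟨k, hk⟩ : ∃ k, m = 2*k + 1 := ⟨(m-1)/2, by omega⟩
  obtain ⟨y, hxy⟩ : ∃ y, x = 2^(v+1) * y := by
    have h' : (2:ℕ)^(v+1) ∣ x := by exact_mod_cast hxdvd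
    exact h'
  rw [show 2*(a+2) - 1 = 2*a+3 from by omega, show 2*(a+2)+(v+1) = 2*a+5+v from by omega]
  set c : ℤ := s - 1 + 2 ^ (2*a+3) with hc
  have hcdvd : (2:ℤ)^(a+2) ∣ c := by
    refine dvd_add ⟨m, hm⟩ ⟨2^(a+1), ?_⟩
    rw [← pow_add, show a+2+(a+1) = 2*a+3 from by omega]
  have lemA : ∀ n : ℕ, (2:ℤ)^(2*a+5+n) ∣ s^(2^(n+1)) - 1 - 2^(n+1) * c := by
    intro n
    induction n with
    | zero =>
      refine ⟨2*(k^2+k), ?_⟩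
      have hs1 : s = 2^(a+2) * m + 1 := by linarith
      have e1 : ((2:ℤ)^(a+2))^2 = 2 * 2^(2*a+3) := by
        rw [← pow_mul, show (a+2)*2 = (2*a+3)+1 from by omega, pow_succ']
      have e2 : (2:ℤ)^(2*a+5+0) = 4 * 2^(2*a+3) := by
        rw [show 2*a+5+0 = 2+(2*a+3) from by omega, pow_add]; norm_num
      rw [hc, e2, hs1, hk]
      linear_combination (2*k+1)^2 * e1
    | succ n ih =>
      have hTd : (2:ℤ)^(a+3+n) ∣ s^(2^(n+1)) - 1 := by
        have h1 : (2:ℤ)^(a+3+n) ∣ s^(2^(n+1)) - 1 - 2^(n+1)*c :=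
          dvd_trans (pow_dvd_pow 2 (by omega)) ih
        have h2 : (2:ℤ)^(a+3+n) ∣ 2^(n+1)*c := by
          have : (2:ℤ)^(a+3+n) = 2^(n+1) * 2^(a+2) := by
            rw [← pow_add]; congr 1; omega
          rw [this]; exact mul_dvd_mul_left _ hcdvd
        have := dvd_add h1 h2
        simpa using this
      have key : s^(2^(n+2)) - 1 - 2^(n+2)*c
          = (s^(2^(n+1)) - 1)^2 + 2*(s^(2^(n+1)) - 1 - 2^(n+1)*c) := by
        rw [show (2:ℕ)^(n+2) = 2^(n+1)*2 from by rw [pow_succ], pow_mul]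
        push_cast; ring
      rw [show 2*a+5+(n+1) = 2*a+6+n from by omega, key]
      refine dvd_add ?_ ?_
      · refine dvd_trans (pow_dvd_pow 2 (show 2*a+6+n ≤ (a+3+n)+(a+3+n) from by omega)) ?_
        rw [pow_add, sq]
        exact mul_dvd_mul hTd hTd
      · have := mul_dvd_mul_left (2:ℤ) ih
        rwa [← pow_succ', show (2*a+5+n)+1 = 2*a+6+n from by omega] at this
  -- main
  have hTdB : (2:ℤ)^(a+3+v) ∣ s^(2^(v+1)) - 1 := by
    have h1 : (2:ℤ)^(a+3+v) ∣ s^(2^(v+1)) - 1 - 2^(v+1)*c :=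
      dvd_trans (pow_dvd_pow 2 (by omega)) (lemA v)
    have h2 : (2:ℤ)^(a+3+v) ∣ 2^(v+1)*c := by
      have : (2:ℤ)^(a+3+v) = 2^(v+1) * 2^(a+2) := by
        rw [← pow_add]; congr 1; omega
      rw [this]; exact mul_dvd_mul_left _ hcdvd
    have := dvd_add h1 h2
    simpa using this
  have hdvd : (2:ℤ)^(2*a+5+v) ∣ s^x - 1 - c * x := by
    have key : s^x - 1 - c * (x:ℤ)
        = ((s^(2^(v+1)))^y - 1 - y*(s^(2^(v+1)) - 1))
          + y*((s^(2^(v+1)) - 1) - 2^(v+1)*c) := by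
      rw [show s^x = (s^(2^(v+1)))^y from by rw [hxy, pow_mul], hxy]
      push_cast; ring
    rw [key]
    refine dvd_add (dvd_trans ?_ (binom2 (s^(2^(v+1))) y)) ((lemA v).mul_left y)
    refine dvd_trans (pow_dvd_pow 2 (show 2*a+5+v ≤ (a+3+v)+(a+3+v) from by omega)) ?_
    rw [pow_add, sq]
    exact mul_dvd_mul hTdB hTdB
  rw [Int.modEq_iff_dvd, show c * (x:ℤ) - (s^x - 1) = -(s^x - 1 - c * (x:ℤ)) from by ring]
  exact dvd_neg.mpr hdvd
end

section
/- Let a, b, c, d be positive integers with d > 1 and max{d, a−d−1} < c < min{a, b}, and set r = 2^d + 1. For integers x₁, x₂, y, y₂ with x₁ odd, the pair of congruences 2^b·x₂ + 2^c·(y₂ − x₁ − 2^{c−d}·y) ≡ 0 (mod 2^a) and 2^b·x₂·y + (r − r^{y₂})·x₁ + 2^c·y ≡ 0 (mod 2^a) holds if and only if x₁ ≡ 1 + 2^{b−c}·x₂ (mod 2^{a−c}) and y₂ ≡ 1 + (2^{c−d} + 2^{c−1})·y (mod 2^{a−d}). -/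
/-- binomial: (1+x)^m = 1 + m x + x^2 k -/
private lemma one_add_pow_aux (x : ℤ) : ∀ m : ℕ, ∃ k : ℤ, (1+x)^m = 1 + m*x + x^2*k := by
  intro m
  induction m with
  | zero => exact ⟨0, by norm_num⟩
  | succ m ih =>
    obtain ⟨k, hk⟩ := ih
    refine ⟨m + k + x*k, ?_⟩
    rw [pow_succ, hk]
    push_cast
    ring

/-- (2^d+1)^(2^s) = 1 + 2^(d+s) * (1 + 2^(d-1) + 2^d k) for d ≥ 2, s ≥ 1 -/
private lemma rpow_two_pow (d : ℕ) (hd : 2 ≤ d) : ∀ s : ℕ, 1 ≤ s →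
    ∃ k : ℤ, ((2:ℤ)^d + 1)^(2^s) = 1 + 2^(d+s) * (1 + 2^(d-1) + 2^d * k) := by
  obtain ⟨e, rfl⟩ : ∃ e, d = e + 2 := ⟨d - 2, by omega⟩
  intro s hs
  induction s with
  | zero => omega
  | succ s ih =>
    rcases Nat.eq_or_lt_of_le hs with h1 | h1
    · -- s + 1 = 1, i.e. s = 0
      refine ⟨0, ?_⟩
      have hs0 : s = 0 := by omega
      subst hs0
      have h2 : e + 2 - 1 = e + 1 := by omega
      rw [h2]
      ring
    · have hs1 : 1 ≤ s := by omega
      obtain ⟨k, hk⟩ := ih hs1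
      have h2 : e + 2 - 1 = e + 1 := by omega
      rw [h2] at hk ⊢
      obtain ⟨f, rfl⟩ : ∃ f, s = f + 1 := ⟨s - 1, by omega⟩
      refine ⟨k + 2^f * (1 + 2^(e+1) + 2^(e+2) * k)^2, ?_⟩
      have h3 : (2:ℕ)^(f+1+1) = 2^(f+1) * 2 := by rw [pow_succ]
      rw [h3, pow_mul, hk]
      ring

/-- r^(2^(a-d)) ≡ 1 mod 2^a -/
private lemma r_order_dvd (a d : ℕ) (hd : 2 ≤ d) (hda : d < a) :
    (2:ℤ)^a ∣ ((2:ℤ)^d + 1)^(2^(a-d)) - 1 := by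
  obtain ⟨k, hk⟩ := rpow_two_pow d hd (a - d) (by omega)
  have h1 : d + (a - d) = a := by omega
  rw [hk, h1]
  exact ⟨1 + 2^(d-1) + 2^d * k, by ring⟩

/-- natural exponents congruent mod 2^(a-d) give congruent powers mod 2^a -/
private lemma r_pow_congr (a d : ℕ) (hd : 2 ≤ d) (hda : d < a) {M M' : ℕ}
    (h : M ≡ M' [MOD 2^(a-d)]) :
    ((2:ℤ)^d + 1)^M ≡ ((2:ℤ)^d + 1)^M' [ZMOD (2:ℤ)^a] := by
  have key : ∀ M M' : ℕ, M' ≤ M → M ≡ M' [MOD 2^(a-d)] →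
      ((2:ℤ)^d + 1)^M ≡ ((2:ℤ)^d + 1)^M' [ZMOD (2:ℤ)^a] := by
    intro M M' hle h
    obtain ⟨t, ht⟩ := (Nat.modEq_iff_dvd' hle).mp h.symm
    have hM : M = M' + 2^(a-d) * t := by omega
    subst hM
    rw [pow_add, pow_mul]
    have h1 : (((2:ℤ)^d + 1)^(2^(a-d)))^t ≡ 1^t [ZMOD (2:ℤ)^a] := by
      refine Int.ModEq.pow t ?_
      rw [Int.modEq_comm, Int.modEq_iff_dvd]
      exact r_order_dvd a d hd hda
    calc ((2:ℤ)^d + 1)^M' * (((2:ℤ)^d + 1)^(2^(a-d)))^t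
        ≡ ((2:ℤ)^d + 1)^M' * 1^t [ZMOD (2:ℤ)^a] := Int.ModEq.mul_left _ h1
      _ = ((2:ℤ)^d + 1)^M' := by ring
  rcases le_total M' M with hle | hle
  · exact key M M' hle h
  · exact (key M' M hle h.symm).symm

/-- 2^d ∣ r^n - 1 -/
private lemma r_pow_sub_one (d n : ℕ) : (2:ℤ)^d ∣ ((2:ℤ)^d + 1)^n - 1 := by
  have h : ((2:ℤ)^d + 1) ≡ 1 [ZMOD (2:ℤ)^d] := by
    rw [Int.modEq_comm, Int.modEq_iff_dvd]; exact ⟨1, by ring⟩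
  have := h.pow n
  rw [one_pow] at this
  have h2 := Int.modEq_iff_dvd.mp this
  rwa [show (1:ℤ) - (2^d+1)^n = -(((2:ℤ)^d+1)^n - 1) by ring, dvd_neg] at h2

/-- for n = 2^m * q with q odd: r^n - 1 = 2^(d+m) * u with u odd -/
private lemma r_pow_val (d m q : ℕ) (hd : 2 ≤ d) (hq : ¬ 2 ∣ q) :
    ∃ u : ℤ, Odd u ∧ ((2:ℤ)^d + 1)^(2^m * q) - 1 = 2^(d+m) * u := by
  obtain ⟨e, rfl⟩ : ∃ e, d = e + 2 := ⟨d - 2, by omega⟩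
  obtain ⟨w, hw_odd, hw⟩ : ∃ w : ℤ, Odd w ∧ ((2:ℤ)^(e+2) + 1)^(2^m) = 1 + 2^(e+2+m) * w := by
    rcases Nat.eq_zero_or_pos m with hm | hm
    · subst hm
      exact ⟨1, odd_one, by rw [pow_zero, pow_one, add_zero, mul_one, add_comm]⟩
    · obtain ⟨k, hk⟩ := rpow_two_pow (e+2) (by omega) m hm
      rw [show e+2-1 = e+1 by omega] at hk
      exact ⟨1 + 2^(e+1) + 2^(e+2) * k, ⟨2^e + 2^(e+1)*k, by ring⟩, hk⟩
  have hpm : ((2:ℤ)^(e+2) + 1)^(2^m * q) = (((2:ℤ)^(e+2) + 1)^(2^m))^q := pow_mul _ _ _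
  set x : ℤ := ((2:ℤ)^(e+2) + 1)^(2^m) with hx
  set S : ℤ := ∑ i ∈ Finset.range q, x^i with hS
  have hgeom : x^q - 1 = S * (x - 1) := (geom_sum_mul x q).symm
  have hx2 : (2:ℤ) ∣ x - 1 := by
    rw [hw]; exact ⟨2^(e+1+m) * w, by ring⟩
  have hS_odd : Odd S := by
    have h2 : (2:ℤ) ∣ S - q := by
      have he : S - q = ∑ i ∈ Finset.range q, (x^i - 1) := by
        rw [Finset.sum_sub_distrib, Finset.sum_const, Finset.card_range, hS]
        ring
      rw [he]
      refine Finset.dvd_sum fun i _ => ?_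
      have h3 : x - 1 ∣ x^i - 1^i := sub_dvd_pow_sub_pow x 1 i
      rw [one_pow] at h3
      exact hx2.trans h3
    obtain ⟨t, ht⟩ := h2
    have hqodd : Odd (q:ℤ) := by
      rw [Int.odd_coe_nat]
      exact Nat.odd_iff.mpr (by omega)
    obtain ⟨j, hj⟩ := hqodd
    exact ⟨j + t, by omega⟩
  refine ⟨w * S, hw_odd.mul hS_odd, ?_⟩
  rw [hpm, hgeom, hw]
  ring

/-- G = r^(2^(c-d)+2^(c-1)) = 1 + 2^c + 2^(c+d) K -/
private lemma rG_eq (d c : ℕ) (hd : 2 ≤ d) (hdc : d < c) :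
    ∃ K : ℤ, ((2:ℤ)^d + 1)^(2^(c-d) + 2^(c-1)) = 1 + 2^c + 2^(c+d) * K := by
  obtain ⟨e, rfl⟩ : ∃ e, d = e + 2 := ⟨d - 2, by omega⟩
  obtain ⟨f, rfl⟩ : ∃ f, c = e + 3 + f := ⟨c - (e + 3), by omega⟩
  obtain ⟨k₁, hk₁⟩ := rpow_two_pow (e+2) (by omega) (f+1) (by omega)
  obtain ⟨k₂, hk₂⟩ := rpow_two_pow (e+2) (by omega) (e+2+f) (by omega)
  rw [show e+2-1 = e+1 by omega] at hk₁ hk₂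
  rw [show e+3+f-(e+2) = f+1 by omega, show e+3+f-1 = e+2+f by omega,
    pow_add, hk₁, hk₂]
  refine ⟨1 + 2^e + 2^(e+1)*k₂ + k₁ + 2^(e+f+2)*(1 + 2^(e+1) + 2^(e+2)*k₁)*(1 + 2^(e+1) + 2^(e+2)*k₂), ?_⟩
  ring

/-- Lemma 2.3: for `H_I(a,b,c,d)` parameters (`d > 1`, `max{d, a-d-1} < c < min{a,b}`)
and `r = 2^d + 1`, with `x₁` odd, the two congruences (2.7), (2.8) hold iff
`x₁ ≡ 1 + 2^(b-c) x₂ (mod 2^(a-c))` and `y₂ ≡ 1 + (2^(c-d) + 2^(c-1)) y (mod 2^(a-d))`.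
Here `r^(y₂)` is computed with the exponent reduced to its nonnegative remainder mod `2^b`. -/
theorem typeI_conditions_iff (a b c d : ℕ) (hd : 1 < d) (hdc : d < c) (hac : a - d - 1 < c)
    (hca : c < a) (hcb : c < b) (x₁ x₂ y y₂ : ℤ) (hx₁ : Odd x₁) :
    ((2 : ℤ) ^ b * x₂ + 2 ^ c * (y₂ - x₁ - 2 ^ (c - d) * y) ≡ 0 [ZMOD 2 ^ a] ∧
      (2 : ℤ) ^ b * x₂ * y
          + ((2 ^ d + 1) - (2 ^ d + 1 : ℤ) ^ ((y₂ % 2 ^ b).toNat)) * x₁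
          + 2 ^ c * y ≡ 0 [ZMOD 2 ^ a]) ↔
    (x₁ ≡ 1 + 2 ^ (b - c) * x₂ [ZMOD 2 ^ (a - c)] ∧
      y₂ ≡ 1 + (2 ^ (c - d) + 2 ^ (c - 1)) * y [ZMOD 2 ^ (a - d)]) := by
  have hd2 : 2 ≤ d := hd
  have hacd : a ≤ c + d := by omega
  have ha2c : a + 1 ≤ 2 * c := by omega
  -- definitions
  set N : ℕ := (y₂ % 2 ^ b).toNat with hN
  set X : ℤ := x₁ - 1 - 2 ^ (b - c) * x₂ with hX
  set Y : ℤ := y₂ - 1 - (2 ^ (c - d) + 2 ^ (c - 1)) * y with hY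
  set n : ℕ := (Y % 2 ^ (a - d)).toNat with hn
  set yh : ℕ := (y % 2 ^ a).toNat with hyh
  set M : ℕ := 1 + (2 ^ (c - d) + 2 ^ (c - 1)) * yh + n with hM
  -- cast facts
  have hncast : (n : ℤ) = Y % 2 ^ (a - d) :=
    Int.toNat_of_nonneg (Int.emod_nonneg _ (by positivity))
  have hNcast : (N : ℤ) = y₂ % 2 ^ b :=
    Int.toNat_of_nonneg (Int.emod_nonneg _ (by positivity))
  have hycast : (yh : ℤ) = y % 2 ^ a :=
    Int.toNat_of_nonneg (Int.emod_nonneg _ (by positivity))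
  -- power identities
  have hp_bc : (2:ℤ) ^ (b - c) * 2 ^ c = 2 ^ b := by rw [← pow_add]; congr 1; omega
  have hp_ac : (2:ℤ) ^ c * 2 ^ (a - c) = 2 ^ a := by rw [← pow_add]; congr 1; omega
  have hp_cd : (2:ℤ) ^ c * 2 ^ d = 2 ^ (c + d) := by rw [← pow_add]
  have hdv_cd : (2:ℤ) ^ a ∣ 2 ^ (c + d) := pow_dvd_pow 2 hacd
  have hdv_2c : (2:ℤ) ^ a ∣ 2 ^ c * 2 ^ c := by
    rw [← pow_add]; exact pow_dvd_pow 2 (by omega)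
  have hdv_2c1 : (2:ℤ) ^ a ∣ 2 ^ (c - 1) * (2 ^ c * y) := by
    rw [show (2:ℤ)^(c-1)*(2^c*y) = (2^(c-1)*2^c)*y by ring, ← pow_add]
    exact Dvd.dvd.mul_right (pow_dvd_pow 2 (by omega)) y
  -- key1 : first congruence iff 2^(a-c) ∣ Y - X
  have e1 : (2:ℤ) ^ b * x₂ + 2 ^ c * (y₂ - x₁ - 2 ^ (c - d) * y)
      = 2 ^ c * (Y - X) + 2 ^ (c - 1) * (2 ^ c * y) := by
    rw [hX, hY]; linear_combination (-x₂) * hp_bc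
  have key1 : ((2:ℤ) ^ b * x₂ + 2 ^ c * (y₂ - x₁ - 2 ^ (c - d) * y) ≡ 0 [ZMOD 2 ^ a])
      ↔ (2:ℤ) ^ (a - c) ∣ Y - X := by
    rw [Int.modEq_zero_iff_dvd, e1]
    constructor
    · intro h
      have h2 : (2:ℤ) ^ a ∣ 2 ^ c * (Y - X) := by
        have := dvd_sub h hdv_2c1
        rwa [add_sub_cancel_right] at this
      rw [← hp_ac] at h2
      exact (mul_dvd_mul_iff_left (a := (2:ℤ) ^ c) (by positivity)).mp h2
    · intro h
      exact dvd_add (by rw [← hp_ac]; exact mul_dvd_mul_left _ h) hdv_2c1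
  -- N ≡ M mod 2^(a-d)
  have hy' : ((yh : ℤ)) ≡ y [ZMOD (2:ℤ) ^ (a - d)] := by
    rw [hycast]
    exact (Int.mod_modEq y ((2:ℤ) ^ a)).of_dvd (pow_dvd_pow 2 (by omega))
  have hn' : ((n : ℤ)) ≡ Y [ZMOD (2:ℤ) ^ (a - d)] := by
    rw [hncast]; exact Int.mod_modEq Y _
  have hMcast : ((M : ℤ)) = 1 + (2 ^ (c - d) + 2 ^ (c - 1)) * (yh : ℤ) + (n : ℤ) := by
    rw [hM]; push_cast; ring
  have hNM : N ≡ M [MOD 2 ^ (a - d)] := by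
    rw [← Int.natCast_modEq_iff]
    push_cast
    have h1 : ((N : ℤ)) ≡ y₂ [ZMOD (2:ℤ) ^ (a - d)] := by
      rw [hNcast]
      exact (Int.mod_modEq y₂ ((2:ℤ) ^ b)).of_dvd (pow_dvd_pow 2 (by omega))
    have h2 : ((M : ℤ)) ≡ y₂ [ZMOD (2:ℤ) ^ (a - d)] := by
      rw [hMcast]
      have h3 := ((hy'.mul_left ((2:ℤ) ^ (c - d) + 2 ^ (c - 1))).add_left 1).add hn'
      have h4 : (1 : ℤ) + (2 ^ (c - d) + 2 ^ (c - 1)) * y + Y = y₂ := by rw [hY]; ring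
      rwa [h4] at h3
    exact h1.trans h2.symm
  have hRNM : ((2:ℤ) ^ d + 1) ^ N ≡ ((2:ℤ) ^ d + 1) ^ M [ZMOD (2:ℤ) ^ a] :=
    r_pow_congr a d hd2 (by omega) hNM
  have hRM : ((2:ℤ) ^ d + 1) ^ M
      = ((2:ℤ) ^ d + 1) * (((2:ℤ) ^ d + 1) ^ (2 ^ (c - d) + 2 ^ (c - 1))) ^ yh
        * ((2:ℤ) ^ d + 1) ^ n := by
    rw [hM, pow_add, pow_add, pow_one, pow_mul]
  obtain ⟨K, hK⟩ := rG_eq d c hd2 hdc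
  -- G^yh ≡ 1 + 2^c y
  have hGy : (((2:ℤ) ^ d + 1) ^ (2 ^ (c - d) + 2 ^ (c - 1))) ^ yh
      ≡ 1 + 2 ^ c * y [ZMOD (2:ℤ) ^ a] := by
    obtain ⟨k, hk⟩ := one_add_pow_aux (2 ^ c + 2 ^ (c + d) * K) yh
    have hGy_eq : (((2:ℤ) ^ d + 1) ^ (2 ^ (c - d) + 2 ^ (c - 1))) ^ yh
        = 1 + (yh : ℤ) * (2 ^ c + 2 ^ (c + d) * K) + (2 ^ c + 2 ^ (c + d) * K) ^ 2 * k := by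
      rw [hK, show (1:ℤ) + 2 ^ c + 2 ^ (c + d) * K = 1 + (2 ^ c + 2 ^ (c + d) * K) by ring]
      exact hk
    rw [Int.modEq_iff_dvd, hGy_eq]
    have hE2 : (2:ℤ) ^ a ∣ (2 ^ c + 2 ^ (c + d) * K) ^ 2 := by
      have h : ((2:ℤ) ^ c + 2 ^ (c + d) * K) ^ 2 = 2 ^ c * 2 ^ c * (1 + 2 ^ d * K) ^ 2 := by
        rw [← hp_cd]; ring
      rw [h]; exact hdv_2c.mul_right _
    have hyy : (2:ℤ) ^ a ∣ y - (yh : ℤ) := ⟨y / 2 ^ a, by rw [hycast, Int.emod_def]; ring⟩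
    have heq : (1 + 2 ^ c * y) - (1 + (yh : ℤ) * (2 ^ c + 2 ^ (c + d) * K)
        + (2 ^ c + 2 ^ (c + d) * K) ^ 2 * k)
        = 2 ^ c * (y - (yh : ℤ)) - 2 ^ (c + d) * ((yh : ℤ) * K)
          - (2 ^ c + 2 ^ (c + d) * K) ^ 2 * k := by ring
    rw [heq]
    exact dvd_sub (dvd_sub (hyy.mul_left _) (hdv_cd.mul_right _)) (hE2.mul_right k)
  -- hS1
  have hS1 : ((2:ℤ) ^ d + 1) ^ N
      ≡ ((2:ℤ) ^ d + 1) * (1 + 2 ^ c * y) * ((2:ℤ) ^ d + 1) ^ n [ZMOD (2:ℤ) ^ a] := by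
    calc ((2:ℤ) ^ d + 1) ^ N ≡ ((2:ℤ) ^ d + 1) ^ M [ZMOD (2:ℤ) ^ a] := hRNM
      _ = ((2:ℤ) ^ d + 1) * (((2:ℤ) ^ d + 1) ^ (2 ^ (c - d) + 2 ^ (c - 1))) ^ yh
            * ((2:ℤ) ^ d + 1) ^ n := hRM
      _ ≡ ((2:ℤ) ^ d + 1) * (1 + 2 ^ c * y) * ((2:ℤ) ^ d + 1) ^ n [ZMOD (2:ℤ) ^ a] :=
        ((hGy.mul_left ((2:ℤ) ^ d + 1)).mul_right _)
  -- key2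
  obtain ⟨v, hv⟩ := r_pow_sub_one d (n + 1)
  rw [pow_succ] at hv
  have hE : ((2:ℤ) ^ b * x₂ * y
        + ((2 ^ d + 1) - (2 ^ d + 1 : ℤ) ^ N) * x₁ + 2 ^ c * y)
      ≡ (((2:ℤ) ^ d + 1) * x₁ * (1 - ((2:ℤ) ^ d + 1) ^ n) - 2 ^ c * y * X)
        [ZMOD (2:ℤ) ^ a] := by
    have hs : ((2:ℤ) ^ b * x₂ * y
        + ((2 ^ d + 1) - (2 ^ d + 1 : ℤ) ^ N) * x₁ + 2 ^ c * y)
        ≡ ((2:ℤ) ^ b * x₂ * y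
        + ((2 ^ d + 1) - ((2:ℤ) ^ d + 1) * (1 + 2 ^ c * y) * ((2:ℤ) ^ d + 1) ^ n) * x₁
        + 2 ^ c * y) [ZMOD (2:ℤ) ^ a] :=
      Int.ModEq.add_right _ (Int.ModEq.add_left _
        (((Int.ModEq.refl _).sub hS1).mul_right x₁))
    refine hs.trans (Int.modEq_iff_dvd.mpr ?_)
    have he2 : (((2:ℤ) ^ d + 1) * x₁ * (1 - ((2:ℤ) ^ d + 1) ^ n) - 2 ^ c * y * X)
        - ((2:ℤ) ^ b * x₂ * y
        + ((2 ^ d + 1) - ((2:ℤ) ^ d + 1) * (1 + 2 ^ c * y) * ((2:ℤ) ^ d + 1) ^ n) * x₁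
        + 2 ^ c * y) = 2 ^ (c + d) * (y * x₁ * v) := by
      rw [hX, ← hp_cd]
      linear_combination (2:ℤ) ^ c * y * x₁ * hv + y * x₂ * hp_bc
    rw [he2]
    exact hdv_cd.mul_right _
  have key2 : ((2:ℤ) ^ b * x₂ * y
        + ((2 ^ d + 1) - (2 ^ d + 1 : ℤ) ^ N) * x₁ + 2 ^ c * y ≡ 0 [ZMOD 2 ^ a])
      ↔ (2:ℤ) ^ a ∣ (((2:ℤ) ^ d + 1) * x₁ * (1 - ((2:ℤ) ^ d + 1) ^ n) - 2 ^ c * y * X) := by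
    rw [← Int.modEq_zero_iff_dvd]
    exact ⟨fun h => hE.symm.trans h, fun h => hE.trans h⟩
  -- conclusion translations
  have hc1 : (x₁ ≡ 1 + 2 ^ (b - c) * x₂ [ZMOD (2:ℤ) ^ (a - c)]) ↔ (2:ℤ) ^ (a - c) ∣ X := by
    rw [Int.modEq_iff_dvd, show (1:ℤ) + 2 ^ (b - c) * x₂ - x₁ = -X by rw [hX]; ring, dvd_neg]
  have hc2 : (y₂ ≡ 1 + (2 ^ (c - d) + 2 ^ (c - 1)) * y [ZMOD (2:ℤ) ^ (a - d)])
      ↔ (2:ℤ) ^ (a - d) ∣ Y := by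
    rw [Int.modEq_iff_dvd,
      show (1:ℤ) + (2 ^ (c - d) + 2 ^ (c - 1)) * y - y₂ = -Y by rw [hY]; ring, dvd_neg]
  have hYn : (2:ℤ) ^ (a - d) ∣ Y - (n : ℤ) :=
    ⟨Y / 2 ^ (a - d), by rw [hncast, Int.emod_def]; ring⟩
  constructor
  · rintro ⟨h1, h2⟩
    have hYX := key1.mp h1
    have hstar := key2.mp h2
    have hn0 : n = 0 := by
      by_contra hn0
      obtain ⟨m, q, hq, hnpq⟩ := Nat.exists_eq_pow_mul_and_not_dvd hn0 2 (by norm_num)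
      obtain ⟨u, hu_odd, hu⟩ := r_pow_val d m q hd2 hq
      rw [← hnpq] at hu
      have hnlt : (n : ℤ) < (2:ℤ) ^ (a - d) := by
        rw [hncast]; exact Int.emod_lt_of_pos Y (by positivity)
      have hnlt' : n < 2 ^ (a - d) := by exact_mod_cast hnlt
      have hm : m < a - d := by
        by_contra hm
        have : 2 ^ (a - d) ≤ 2 ^ m := Nat.pow_le_pow_right (by norm_num) (by omega)
        have h2m : 2 ^ m ≤ n := by
          rw [hnpq]; exact Nat.le_mul_of_pos_right _ (by omega)
        omega
      have hXn : (2:ℤ) ^ (a - c) ∣ X - (n : ℤ) := by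
        have d1 : (2:ℤ) ^ (a - c) ∣ Y - (n : ℤ) :=
          dvd_trans (pow_dvd_pow 2 (by omega)) hYn
        rw [show X - (n:ℤ) = (Y - (n:ℤ)) - (Y - X) by ring]
        exact dvd_sub d1 hYX
      obtain ⟨t, ht⟩ := hXn
      have hq1 : (n : ℤ) = 2 ^ m * (q : ℤ) := by exact_mod_cast congrArg (Nat.cast (R := ℤ)) hnpq
      have hp1 : (2:ℤ) ^ c * 2 ^ m = 2 ^ (d + m) * 2 ^ (c - d) := by
        rw [← pow_add, ← pow_add]; congr 1; omega
      have hW : ((2:ℤ) ^ d + 1) * x₁ * (1 - ((2:ℤ) ^ d + 1) ^ n) - 2 ^ c * y * X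
          = -(2 ^ (d + m) * (((2:ℤ) ^ d + 1) * x₁ * u + 2 ^ (c - d) * y * q))
            - 2 ^ a * (y * t) := by
        rw [← hp_ac]
        linear_combination (-(((2:ℤ)^d+1) * x₁)) * hu - 2 ^ c * y * ht
          - 2 ^ c * y * hq1 - y * (q:ℤ) * hp1
      rw [hW] at hstar
      have h5 : (2:ℤ) ^ a ∣ 2 ^ (d + m) * (((2:ℤ) ^ d + 1) * x₁ * u + 2 ^ (c - d) * y * q) := by
        have h6 := dvd_add hstar (Dvd.intro (y * t) rfl)
        rw [show -(2 ^ (d+m) * (((2:ℤ)^d+1) * x₁ * u + 2 ^ (c-d) * y * q)) - 2^a * (y*t)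
            + 2 ^ a * (y * t)
            = -(2 ^ (d+m) * (((2:ℤ)^d+1) * x₁ * u + 2 ^ (c-d) * y * q)) by ring,
          dvd_neg] at h6
        exact h6
      have hWodd : Odd (((2:ℤ) ^ d + 1) * x₁ * u + 2 ^ (c - d) * y * (q : ℤ)) := by
        have hrodd : Odd ((2:ℤ) ^ d + 1) := by
          refine Even.add_one ?_
          rw [show d = (d - 1) + 1 by omega]
          exact ⟨2 ^ (d - 1), by ring⟩
        have heven : Even ((2:ℤ) ^ (c - d) * y * (q : ℤ)) := by
          have : Even ((2:ℤ) ^ (c - d)) := by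
            rw [show c - d = (c - d - 1) + 1 by omega]
            exact ⟨2 ^ (c - d - 1), by ring⟩
          exact (this.mul_right y).mul_right _
        exact ((hrodd.mul hx₁).mul hu_odd).add_even heven
      have h7 : (2:ℤ) ^ (d + m) * 2 ∣ 2 ^ (d + m)
          * (((2:ℤ) ^ d + 1) * x₁ * u + 2 ^ (c - d) * y * q) := by
        refine dvd_trans ?_ h5
        rw [show (2:ℤ) ^ (d + m) * 2 = 2 ^ (d + m + 1) by rw [pow_succ]]
        exact pow_dvd_pow 2 (by omega)
      have h8 : (2:ℤ) ∣ ((2:ℤ) ^ d + 1) * x₁ * u + 2 ^ (c - d) * y * q :=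
        (mul_dvd_mul_iff_left (a := (2:ℤ) ^ (d + m)) (by positivity)).mp h7
      obtain ⟨w2, hw2⟩ := h8
      obtain ⟨w3, hw3⟩ := hWodd
      omega
    have hYdvd : (2:ℤ) ^ (a - d) ∣ Y := by
      have : (n : ℤ) = 0 := by rw [hn0]; norm_num
      rw [this, sub_zero] at hYn
      exact hYn
    refine ⟨hc1.mpr ?_, hc2.mpr hYdvd⟩
    rw [show X = Y - (Y - X) by ring]
    exact dvd_sub (dvd_trans (pow_dvd_pow 2 (by omega)) hYdvd) hYX
  · rintro ⟨h1, h2⟩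
    have hX' := hc1.mp h1
    have hY' := hc2.mp h2
    have hn0 : n = 0 := by
      rw [hn, Int.emod_eq_zero_of_dvd hY']
      rfl
    refine ⟨key1.mpr ?_, key2.mpr ?_⟩
    · exact dvd_sub (dvd_trans (pow_dvd_pow 2 (by omega)) hY') hX'
    · obtain ⟨x', hx'⟩ := hX'
      refine ⟨-(y * x'), ?_⟩
      rw [hn0, pow_zero, hx', ← hp_ac]
      ring
end

section
/- The generalized metacyclic 2-group H(2^a, 2^b; 2^c, 2^d+1) with d > 1 and max{d, a−d−1} < c < min{a, b} is a nonsplit extension of the cyclic group of order 2^a by the cyclic group of order 2^b; i.e., the subgroup generated by α is normal of order 2^a with cyclic quotient of order 2^b, and no complement to ⟨α⟩ exists. -/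
/-- Relators for the metacyclic presentation
`⟨α, β ∣ α^n = 1, β^m = α^t, β α β⁻¹ = α^r⟩` (generator `true ↦ α`, `false ↦ β`). -/
def metacyclicRels (n m t r : ℕ) : Set (FreeGroup Bool) :=
  {FreeGroup.of true ^ n,
   FreeGroup.of false ^ m * (FreeGroup.of true ^ t)⁻¹,
   FreeGroup.of false * FreeGroup.of true * (FreeGroup.of false)⁻¹ *
     (FreeGroup.of true ^ r)⁻¹}

/-- The metacyclic group `H(n, m; t, r)`. -/
abbrev Metacyclic (n m t r : ℕ) := PresentedGroup (metacyclicRels n m t r)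

/-!
`⟨α⟩` is normal because conjugation by `β` maps the finite cyclic group `⟨α⟩` into itself, and
`H ⧸ ⟨α⟩` is generated by the image of `β`, whose order is exactly `2^b` since `H` maps onto
`ℤ/2^b` via `α ↦ 0`, `β ↦ 1`.

That `α` has order exactly `2^a` is seen in the model `(ℤ/2^a ⋊ ℤ) ⧸ ⟨(-2^c, 2^b)⟩`, where `ℤ`
acts through powers of `r = 2^d + 1`: the element `(-2^c, 2^b)` is central because `r` fixes `2^c`
and `r^(2^b) = 1` in `ℤ/2^a`, and it meets `ℤ/2^a` trivially.

A complement `K` would contain some `α^j β`, but `(α^j β)^(2^b) = α^(j S + 2^c)` with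
`S = ∑_{i < 2^b} r^i` divisible by `2^b`; the exponent has 2-adic valuation exactly `c < a`, so
this is a nontrivial element of `⟨α⟩ ∩ K`.
-/

open Finset Subgroup PresentedGroup SemidirectProduct Multiplicative

theorem two_pow_dvd_geom_sum_two_pow {r : ℕ} (hr : Odd r) (k : ℕ) :
    2 ^ k ∣ ∑ i ∈ range (2 ^ k), r ^ i := by
  induction k with
  | zero => simp
  | succ k ih =>
    have hsplit : ∑ i ∈ range (2 ^ (k + 1)), r ^ i =
        (1 + r ^ 2 ^ k) * ∑ i ∈ range (2 ^ k), r ^ i := by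
      rw [pow_succ, mul_two, sum_range_add, add_mul, one_mul, mul_sum]
      simp only [pow_add]
    rw [hsplit, pow_succ, mul_comm (2 ^ k)]
    exact mul_dvd_mul (odd_one.add_odd hr.pow).two_dvd ih

theorem one_add_two_pow_pow_two_pow_eq_one {a b d : ℕ} (hd : 2 ≤ d) (h : a ≤ b + d) :
    (1 + 2 ^ d : ZMod (2 ^ a)) ^ 2 ^ b = 1 := by
  obtain ⟨y, hy⟩ := ZMod.exists_one_add_mul_pow_prime_pow_eq (R := ZMod (2 ^ a))
    (u := 2 ^ d) (v := 2) Nat.prime_two (dvd_pow_self 2 (by omega))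
    (by rw [Nat.cast_ofNat, ← pow_succ', ← pow_succ, ← pow_mul]; exact pow_dvd_pow 2 (by omega))
    1 b
  have h0 : (2 ^ b * 2 ^ d : ZMod (2 ^ a)) = 0 := by
    rw [← pow_add]; exact_mod_cast (ZMod.natCast_eq_zero_iff _ _).mpr (pow_dvd_pow 2 h)
  simpa [h0] using hy

theorem zpow_mul_pow_of_conj {G : Type*} [Group G] {x y : G} {r : ℕ} (h : y * x * y⁻¹ = x ^ r)
    (j : ℤ) (n : ℕ) : (x ^ j * y) ^ n = x ^ (j * ∑ i ∈ range n, (r : ℤ) ^ i) * y ^ n := by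
  have hy : SemiconjBy y x (x ^ r) := by rw [SemiconjBy, ← h]; group
  have hyn : ∀ n : ℕ, SemiconjBy (y ^ n) (x ^ j) (x ^ (j * (r : ℤ) ^ n)) := by
    intro n
    induction n with
    | zero => simp
    | succ n ih =>
      rw [pow_succ']
      refine SemiconjBy.mul_left ?_ ih
      simpa [← zpow_natCast, ← zpow_mul, pow_succ, mul_comm, mul_left_comm] using
        hy.zpow_right (j * r ^ n)
  induction n with
  | zero => simp
  | succ n ih =>
    rw [pow_succ, ih, sum_range_succ, mul_add, zpow_add, mul_assoc, ← mul_assoc (y ^ n),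
      (hyn n).eq]
    group

theorem Subgroup.zpowers_normal_of_mem_center {G : Type*} [Group G] {z : G} (hz : z ∈ center G) :
    (zpowers z).Normal where
  conj_mem := by
    rintro _ ⟨k, rfl⟩ g
    rw [(mem_center_iff.mp (zpow_mem hz k) g), mul_inv_cancel_right]
    exact zpow_mem_zpowers z k

theorem Subgroup.zpowers_normal_of_conj_mem {G : Type*} [Group G] {S : Set G}
    (hS : closure S = ⊤) {x : G} (hx : IsOfFinOrder x) (h : ∀ s ∈ S, s * x * s⁻¹ ∈ zpowers x) :
    (zpowers x).Normal := by
  have := (finite_zpowers.mpr hx).to_subtype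
  rw [← normalizer_eq_top_iff, eq_top_iff, ← hS, closure_le]
  refine fun s hs => mem_normalizer_fintype ?_
  rintro _ ⟨k, rfl⟩
  exact conj_zpow (a := s) ▸ zpow_mem (h s hs) k

theorem not_isComplement'_zpowers {G : Type*} [Group G] {x y : G} {r a b c : ℕ} (hr : Odd r)
    (hxy : y * x * y⁻¹ = x ^ r) (hx : orderOf x = 2 ^ a) (hy : y ^ 2 ^ b = x ^ 2 ^ c)
    (hca : c < a) (hcb : c < b) (K : Subgroup G) : ¬ (zpowers x).IsComplement' K := by
  intro hK
  obtain ⟨⟨⟨_, j, rfl⟩, k⟩, hyk, -⟩ := hK.existsUnique y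
  obtain ⟨S, hS⟩ : (2 : ℤ) ^ b ∣ ∑ i ∈ range (2 ^ b), (r : ℤ) ^ i := by
    exact_mod_cast two_pow_dvd_geom_sum_two_pow hr b
  have hk : (k : G) ^ 2 ^ b = x ^ (-j * (2 ^ b * S) + 2 ^ c) := by
    rw [← inv_mul_eq_of_eq_mul hyk.symm, ← zpow_neg, zpow_mul_pow_of_conj hxy, hy, zpow_add, hS]
    norm_cast
  have hk1 : (k : G) ^ 2 ^ b = 1 :=
    disjoint_def.mp hK.disjoint (hk ▸ zpow_mem_zpowers x _) (pow_mem k.2 _)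
  have hdvd : ((2 ^ a : ℕ) : ℤ) ∣ -j * (2 ^ b * S) + 2 ^ c :=
    hx ▸ orderOf_dvd_iff_zpow_eq_one.mpr (hk ▸ hk1)
  have hjS : (2 : ℤ) ^ (c + 1) ∣ -j * (2 ^ b * S) :=
    dvd_mul_of_dvd_right (dvd_mul_of_dvd_left (pow_dvd_pow 2 hcb) S) _
  have : (2 : ℤ) ^ (c + 1) ∣ 2 ^ c :=
    (dvd_add_right hjS).mp ((pow_dvd_pow 2 hca).trans (by exact_mod_cast hdvd))
  exact absurd ((pow_dvd_pow_iff two_ne_zero Int.prime_two.not_isUnit).mp this) (by omega)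

section Model

variable {R : Type*} [Ring R] (u : Rˣ)

def unitsZPowersMulAut : Multiplicative ℤ →* MulAut (Multiplicative R) where
  toFun k := AddEquiv.toMultiplicative (DistribMulAction.toAddAut Rˣ R (u ^ k.toAdd))
  map_one' := by ext; simp
  map_mul' k l := by ext; simp [zpow_add, mul_smul]

@[simp] theorem unitsZPowersMulAut_apply (k : ℤ) (x : R) :
    unitsZPowersMulAut u (ofAdd k) (ofAdd x) = ofAdd ((u ^ k) • x) := rfl

variable {u} {m : ℤ} {t : R}

theorem mk_ofAdd_neg_mem_center (hm : u ^ m = 1) (ht : u • t = t) :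
    (⟨ofAdd (-t), ofAdd m⟩ : Multiplicative R ⋊[unitsZPowersMulAut u] Multiplicative ℤ) ∈
      center _ := by
  have hkt : ∀ k : ℤ, u ^ k • t = t := fun k =>
    zpow_mem (show u ∈ MulAction.stabilizer Rˣ t from ht) k
  rw [mem_center_iff]
  rintro ⟨x, k⟩
  obtain ⟨x, rfl⟩ := ofAdd.surjective x
  obtain ⟨k, rfl⟩ := ofAdd.surjective k
  refine SemidirectProduct.ext ?_ (mul_comm _ _)
  simp only [mul_left, unitsZPowersMulAut_apply, smul_neg, hkt, hm, one_smul, ← ofAdd_add]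
  rw [add_comm]

theorem eq_zero_of_inl_mem_zpowers (hm : m ≠ 0) {x : R}
    (hx : inl (ofAdd x) ∈ zpowers
      (⟨ofAdd (-t), ofAdd m⟩ : Multiplicative R ⋊[unitsZPowersMulAut u] Multiplicative ℤ)) :
    x = 0 := by
  obtain ⟨k, hk⟩ := hx
  have hk0 : k = 0 := by
    have := congrArg rightHom hk
    rw [map_zpow, rightHom_inl, rightHom_eq_right, ← ofAdd_zsmul, ofAdd_eq_one,
      smul_eq_mul] at this
    exact (mul_eq_zero.mp this).resolve_right hm
  subst hk0
  simpa using congrArg (fun g => toAdd g.left) hk.symm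

end Model

namespace Metacyclic

variable {n m t r : ℕ}

theorem of_true_pow : (of true : Metacyclic n m t r) ^ n = 1 := by
  simpa [of] using one_of_mem (rels := metacyclicRels n m t r) (Set.mem_insert _ _)

theorem of_false_pow : (of false : Metacyclic n m t r) ^ m = of true ^ t := by
  simpa [of] using mk_eq_mk_of_mul_inv_mem (rels := metacyclicRels n m t r) (Or.inr (Or.inl rfl))

theorem of_false_conj :
    of false * of true * (of false)⁻¹ = (of true : Metacyclic n m t r) ^ r := by
  simpa [of] using mk_eq_mk_of_mul_inv_mem (rels := metacyclicRels n m t r) (Or.inr (Or.inr rfl))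

section Lift

variable {G : Type*} [Group G] {x y : G}

def lift (hx : x ^ n = 1) (hy : y ^ m = x ^ t) (hxy : y * x * y⁻¹ = x ^ r) :
    Metacyclic n m t r →* G :=
  toGroup (f := fun i => if i then x else y) <| by
    rintro _ (rfl | rfl | rfl) <;> simp [hx, hy, hxy]

variable (hx : x ^ n = 1) (hy : y ^ m = x ^ t) (hxy : y * x * y⁻¹ = x ^ r)

@[simp] theorem lift_of_true : lift hx hy hxy (of true) = x := toGroup.of _
@[simp] theorem lift_of_false : lift hx hy hxy (of false) = y := toGroup.of _

end Lift

theorem orderOf_of_true (hm : m ≠ 0) (hr : (r : ZMod n) ^ m = 1) (ht : (r : ZMod n) * t = t) :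
    orderOf (of true : Metacyclic n m t r) = n := by
  let u := Units.ofPowEqOne _ m hr hm
  let z : Multiplicative (ZMod n) ⋊[unitsZPowersMulAut u] Multiplicative ℤ :=
    ⟨ofAdd (-(t : ZMod n)), ofAdd (m : ℤ)⟩
  have := zpowers_normal_of_mem_center (z := z)
    (mk_ofAdd_neg_mem_center (by exact_mod_cast Units.pow_ofPowEqOne hr hm) ht)
  let π := QuotientGroup.mk' (zpowers z)
  have hx : ∀ k : ℕ, π (inl (ofAdd 1)) ^ k = π (inl (ofAdd (k : ZMod n))) := fun k => by
    rw [← map_pow, ← map_pow, ← ofAdd_nsmul, nsmul_one]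
  have hxn : π (inl (ofAdd 1)) ^ n = 1 := by
    rw [hx, ZMod.natCast_self, ofAdd_zero, map_one, map_one]
  have hy : π (inr (ofAdd 1)) ^ m = π (inl (ofAdd 1)) ^ t := by
    rw [hx, ← map_pow, ← map_pow, ← ofAdd_nsmul, nsmul_one, eq_comm, QuotientGroup.mk'_eq_mk']
    refine ⟨z, mem_zpowers z, SemidirectProduct.ext ?_ ?_⟩ <;> simp [z]
  have hxy : π (inr (ofAdd 1)) * π (inl (ofAdd 1)) * (π (inr (ofAdd 1)))⁻¹ =
      π (inl (ofAdd 1)) ^ r := by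
    rw [hx, ← map_inv, ← map_mul, ← map_mul]
    congr 1
    refine SemidirectProduct.ext ?_ ?_ <;> simp [u, Units.smul_def]
  refine Nat.dvd_antisymm (orderOf_dvd_of_pow_eq_one of_true_pow) ?_
  rw [← ZMod.natCast_eq_zero_iff]
  refine eq_zero_of_inl_mem_zpowers (u := u) (t := (t : ZMod n)) (Int.natCast_ne_zero.mpr hm) ?_
  rw [← QuotientGroup.eq_one_iff, ← QuotientGroup.mk'_apply, ← hx, ← lift_of_true hxn hy hxy,
    ← map_pow, pow_orderOf_eq_one, map_one]

theorem zpowers_of_true_normal (hn : n ≠ 0) :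
    (zpowers (of true : Metacyclic n m t r)).Normal :=
  zpowers_normal_of_conj_mem (closure_range_of _)
    (isOfFinOrder_iff_pow_eq_one.mpr ⟨n, Nat.pos_of_ne_zero hn, of_true_pow⟩) <| by
    rintro _ ⟨_ | _, rfl⟩
    · rw [of_false_conj]
      exact pow_mem (mem_zpowers _) r
    · rw [mul_inv_cancel_right]
      exact mem_zpowers _

section Quotient

variable [(zpowers (of true : Metacyclic n m t r)).Normal]

theorem zpowers_mk_of_false_eq_top :
    zpowers ((of false : Metacyclic n m t r) : Metacyclic n m t r ⧸ zpowers (of true)) = ⊤ := by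
  rw [eq_top_iff, ← map_top_of_surjective _ (QuotientGroup.mk'_surjective _), ← closure_range_of,
    MonoidHom.map_closure, closure_le]
  rintro _ ⟨_, ⟨_ | _, rfl⟩, rfl⟩
  · exact mem_zpowers _
  · rw [QuotientGroup.mk'_apply, (QuotientGroup.eq_one_iff _).mpr (mem_zpowers _)]
    exact one_mem _

theorem orderOf_mk_of_false :
    orderOf ((of false : Metacyclic n m t r) : Metacyclic n m t r ⧸ zpowers (of true)) = m := by
  let ψ : Metacyclic n m t r →* Multiplicative (ZMod m) :=
    lift (one_pow n) (by rw [← ofAdd_nsmul, nsmul_one, ZMod.natCast_self, one_pow]; rfl)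
      (by simp)
  let ψ' := QuotientGroup.lift _ ψ (zpowers_le.mpr (lift_of_true ..))
  refine Nat.dvd_antisymm (orderOf_dvd_of_pow_eq_one ?_) ?_
  · rw [← QuotientGroup.mk_pow, of_false_pow, QuotientGroup.eq_one_iff]
    exact pow_mem (mem_zpowers _) t
  · simpa [ψ', ψ, orderOf_ofAdd_eq_addOrderOf] using
      orderOf_map_dvd ψ' (of false : Metacyclic n m t r)

theorem isCyclic_quotient : IsCyclic (Metacyclic n m t r ⧸ zpowers (of true)) :=
  isCyclic_iff_exists_zpowers_eq_top.mpr ⟨_, zpowers_mk_of_false_eq_top⟩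

theorem card_quotient : Nat.card (Metacyclic n m t r ⧸ zpowers (of true)) = m := by
  rw [← card_top, ← zpowers_mk_of_false_eq_top, Nat.card_zpowers, orderOf_mk_of_false]

end Quotient

end Metacyclic

theorem typeI_nonsplit_general (a b c d : ℕ) (hd : 1 < d) (hac : a - d - 1 < c)
    (hca : c < a) (hcb : c < b) :
    letI H := Metacyclic (2 ^ a) (2 ^ b) (2 ^ c) (2 ^ d + 1)
    letI α : H := PresentedGroup.of true
    letI A : Subgroup H := Subgroup.zpowers α
    A.Normal ∧ Nat.card A = 2 ^ a ∧
      (∀ _ : A.Normal, IsCyclic (H ⧸ A) ∧ Nat.card (H ⧸ A) = 2 ^ b) ∧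
      ¬ ∃ K : Subgroup H, A.IsComplement' K := by
  have hr : ((2 ^ d + 1 : ℕ) : ZMod (2 ^ a)) ^ 2 ^ b = 1 := by
    push_cast
    rw [add_comm]
    exact one_add_two_pow_pow_two_pow_eq_one hd (by omega)
  have ht : ((2 ^ d + 1 : ℕ) : ZMod (2 ^ a)) * (2 ^ c : ℕ) = (2 ^ c : ℕ) := by
    have h0 : ((2 ^ (d + c) : ℕ) : ZMod (2 ^ a)) = 0 :=
      (ZMod.natCast_eq_zero_iff _ _).mpr (pow_dvd_pow 2 (by omega))
    push_cast at h0 ⊢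
    rw [pow_add] at h0
    linear_combination h0
  have hα := Metacyclic.orderOf_of_true (pow_ne_zero b two_ne_zero) hr ht
  refine ⟨Metacyclic.zpowers_of_true_normal (pow_ne_zero a two_ne_zero),
    by rw [Nat.card_zpowers, hα], fun _ => ⟨Metacyclic.isCyclic_quotient, Metacyclic.card_quotient⟩,
    ?_⟩
  rintro ⟨K, hK⟩
  exact not_isComplement'_zpowers (Nat.even_pow.mpr ⟨even_two, by omega⟩).add_one
    Metacyclic.of_false_conj hα Metacyclic.of_false_pow hca hcb K hK

/-- `H(2^a, 2^b; 2^c, 2^d + 1)` with `d > 1` and `max{d, a-d-1} < c < min{a, b}` is a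
nonsplit extension of `ℤ/2^a` by `ℤ/2^b`: the subgroup `⟨α⟩` is normal of order `2^a`,
the quotient is cyclic of order `2^b`, and `⟨α⟩` has no complement. -/
theorem typeI_nonsplit (a b c d : ℕ) (hd : 1 < d) (hdc : d < c) (hac : a - d - 1 < c)
    (hca : c < a) (hcb : c < b) :
    letI H := Metacyclic (2 ^ a) (2 ^ b) (2 ^ c) (2 ^ d + 1)
    letI α : H := PresentedGroup.of true
    letI A : Subgroup H := Subgroup.zpowers α
    A.Normal ∧ Nat.card A = 2 ^ a ∧
      (∀ _ : A.Normal, IsCyclic (H ⧸ A) ∧ Nat.card (H ⧸ A) = 2 ^ b) ∧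
      ¬ ∃ K : Subgroup H, A.IsComplement' K :=
  typeI_nonsplit_general a b c d hd hac hca hcb
end

section
/- Let a, e be integers with 1 < e < a and set r = 2^e − 1. For any integer z with v₂(z) = u ≥ 1, one has r^{2z} − 1 ≡ (r² − 1 + 2^{2e+1})·z (mod 2^{2e+2+u}). -/
/-!
Write `r² = 1 + t` with `t = 2^(e+1) s`, `s` odd. In the binomial expansion of `(1 + t)^z`, the
terms of degree `k ≥ 3` vanish modulo `2^(2e+2+u)`, since `2^(k(e+1)) ∣ t^k` and
`v₂ (z.choose k) ≥ u - v₂ k`. The quadratic term is `z.choose 2 * t² = 2^(2e+1) z (z - 1) s²`,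
which agrees with `2^(2e+1) z` modulo `2^(2e+2+u)` because `(z - 1) s²` is odd.
-/

open Finset

theorem Nat.Prime.pow_sub_factorization_dvd_choose {p u z k : ℕ} (hp : p.Prime) (hk : k ≠ 0)
    (hz : p ^ u ∣ z) : p ^ (u - k.factorization p) ∣ z.choose k := by
  rcases lt_or_ge z k with hzk | hkz
  · simp [Nat.choose_eq_zero_of_lt hzk]
  have hC : z.choose k ≠ 0 := (Nat.choose_pos hkz).ne'
  obtain ⟨n, rfl⟩ := Nat.exists_eq_add_one_of_ne_zero (by omega : z ≠ 0)
  obtain ⟨j, rfl⟩ := Nat.exists_eq_add_one_of_ne_zero hk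
  have hmul : p ^ u ∣ (n + 1).choose (j + 1) * (j + 1) :=
    Nat.add_one_mul_choose_eq n j ▸ hz.mul_right _
  rw [hp.pow_dvd_iff_le_factorization (mul_ne_zero hC hk), Nat.factorization_mul hC hk,
    Finsupp.add_apply] at hmul
  exact (hp.pow_dvd_iff_le_factorization hC).2 (by omega)

theorem Int.one_add_pow_modEq_of_pow_dvd {p n u z : ℕ} {t : ℤ} (hp : p.Prime) (hn : 2 ≤ n)
    (ht : (p : ℤ) ^ n ∣ t) (hz : p ^ u ∣ z) :
    (1 + t) ^ z ≡ 1 + z * t + z.choose 2 * t ^ 2 [ZMOD p ^ (2 * n + u)] := by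
  have hsplit : (1 + t) ^ z = 1 + z * t + z.choose 2 * t ^ 2
      + ∑ k ∈ Finset.range z, t ^ (3 + k) * (z.choose (3 + k) : ℤ) := by
    have hextend : (1 + t) ^ z = ∑ k ∈ Finset.range (3 + z), t ^ k * (z.choose k : ℤ) := by
      rw [add_comm, add_pow, show 3 + z = z + 1 + 2 by omega, sum_range_add _ (z + 1) 2]
      simp [sum_range_succ, Nat.choose_eq_zero_of_lt]
    rw [hextend, sum_range_add]
    simp only [sum_range_succ, sum_range_zero, pow_zero, pow_one, Nat.choose_zero_right,
      Nat.choose_one_right, Nat.cast_one]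
    ring
  have htail :
      (p : ℤ) ^ (2 * n + u) ∣ ∑ k ∈ Finset.range z, t ^ (3 + k) * (z.choose (3 + k) : ℤ) := by
    refine dvd_sum fun k _ => ?_
    obtain ⟨v, hv_def⟩ : ∃ v, v = (3 + k).factorization p := ⟨_, rfl⟩
    have hv : v < 3 + k := hv_def ▸ Nat.factorization_lt p (by omega)
    have hkn : 2 * n + (k + 2) ≤ (3 + k) * n := by nlinarith
    calc (p : ℤ) ^ (2 * n + u) ∣ p ^ ((3 + k) * n + (u - v)) := pow_dvd_pow _ (by omega)
      _ = p ^ ((3 + k) * n) * p ^ (u - v) := pow_add _ _ _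
      _ ∣ t ^ (3 + k) * (z.choose (3 + k) : ℤ) :=
          mul_dvd_mul (by rw [mul_comm, pow_mul]; exact pow_dvd_pow_of_dvd ht _)
            (by exact_mod_cast hv_def ▸ hp.pow_sub_factorization_dvd_choose (by omega) hz)
  rw [hsplit]
  simpa using (Int.modEq_zero_iff_dvd.2 htail).add_left (1 + z * t + z.choose 2 * t ^ 2)

theorem Int.choose_two_mul_sq_modEq {n u z : ℕ} {s : ℤ} (hs : Odd s) (hu : 1 ≤ u)
    (hz : 2 ^ u ∣ z) :
    (z.choose 2 : ℤ) * (2 ^ (n + 1) * s) ^ 2 ≡ 2 ^ (2 * n + 1) * z [ZMOD 2 ^ (2 * n + 2 + u)] := by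
  have hchoose : (z.choose 2 : ℤ) * 2 = z * (z - 1) := by
    rcases z with _ | y
    · simp
    · have h := Nat.add_one_mul_choose_eq y 1
      rw [Nat.choose_one_right] at h
      push_cast
      rw [add_sub_cancel_right]
      exact_mod_cast h.symm
  have hzeven : Even (z : ℤ) := by
    exact_mod_cast (even_iff_two_dvd.2 ((dvd_pow_self 2 (by omega)).trans hz))
  have hparity : 2 ∣ ((z : ℤ) - 1) * s ^ 2 - 1 :=
    (((hzeven.sub_odd odd_one).mul hs.pow).sub_odd odd_one).two_dvd
  have hz_int : (2 : ℤ) ^ u ∣ z := by exact_mod_cast hz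
  have hdiff : (2 : ℤ) ^ (2 * n + 1) * z - z.choose 2 * (2 ^ (n + 1) * s) ^ 2
      = -(2 ^ (2 * n + 1) * z * (((z : ℤ) - 1) * s ^ 2 - 1)) := by
    linear_combination -(2 : ℤ) ^ (2 * n + 1) * s ^ 2 * hchoose
  rw [Int.modEq_iff_dvd, hdiff, dvd_neg, show 2 * n + 2 + u = 2 * n + 1 + u + 1 by ring,
    pow_succ, pow_add _ (2 * n + 1) u]
  exact mul_dvd_mul (mul_dvd_mul_left _ hz_int) hparity

theorem typeII_pow_congr_general (e : ℕ) (he : 1 < e) (z u : ℕ) (hu : 1 ≤ u)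
    (hval : emultiplicity 2 (z : ℤ) = (u : ℕ∞)) :
    ((2 : ℤ) ^ e - 1) ^ (2 * z) - 1
      ≡ (((2 : ℤ) ^ e - 1) ^ 2 - 1 + 2 ^ (2 * e + 1)) * (z : ℤ) [ZMOD 2 ^ (2 * e + 2 + u)] := by
  have hz : 2 ^ u ∣ z := by exact_mod_cast pow_dvd_of_le_emultiplicity hval.ge
  set s : ℤ := 2 ^ (e - 1) - 1
  have hs : Odd s := (Int.even_pow.2 ⟨even_two, by omega⟩).sub_odd odd_one
  have hsq : ((2 : ℤ) ^ e - 1) ^ 2 = 1 + 2 ^ (e + 1) * s := by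
    obtain ⟨d, rfl⟩ : ∃ d, e = d + 2 := ⟨e - 2, by omega⟩
    simp only [s, show d + 2 - 1 = d + 1 from rfl]
    ring
  have hbinom := Int.one_add_pow_modEq_of_pow_dvd (n := e + 1) Nat.prime_two (by omega)
    (dvd_mul_right _ s) hz
  rw [show 2 * (e + 1) + u = 2 * e + 2 + u by ring] at hbinom
  calc ((2 : ℤ) ^ e - 1) ^ (2 * z) - 1 = (1 + 2 ^ (e + 1) * s) ^ z - 1 := by rw [pow_mul, hsq]
    _ ≡ 1 + z * (2 ^ (e + 1) * s) + z.choose 2 * (2 ^ (e + 1) * s) ^ 2 - 1 [ZMOD _] :=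
        hbinom.sub_right 1
    _ ≡ 1 + z * (2 ^ (e + 1) * s) + 2 ^ (2 * e + 1) * z - 1 [ZMOD _] :=
        ((Int.choose_two_mul_sq_modEq hs hu hz).add_left _).sub_right 1
    _ = (((2 : ℤ) ^ e - 1) ^ 2 - 1 + 2 ^ (2 * e + 1)) * z := by rw [hsq]; ring

/-- For `1 < e < a`, `r = 2^e - 1` and any `z` with `v₂(z) = u ≥ 1`:
`r^(2z) - 1 ≡ (r² - 1 + 2^(2e+1)) * z (mod 2^(2e+2+u))`. -/
theorem typeII_pow_congr (a e : ℕ) (he : 1 < e) (hea : e < a) (z u : ℕ) (hu : 1 ≤ u)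
    (hval : emultiplicity 2 (z : ℤ) = (u : ℕ∞)) :
    ((2 : ℤ) ^ e - 1) ^ (2 * z) - 1
      ≡ (((2 : ℤ) ^ e - 1) ^ 2 - 1 + 2 ^ (2 * e + 1)) * (z : ℤ) [ZMOD 2 ^ (2 * e + 2 + u)] :=
  typeII_pow_congr_general e he z u hu hval
end

section
/- Let H = H(2^a, 2^b; 2^{a−1}, 2^e−1) with max{1, a−b} < e < min{a, b}, and write r = 2^e−1, y₁ = 2^{b−1}y for an integer y. Then the automorphism conditions (2^b·x₂ terms vanish and r^{y₂−1} − 1 ≡ 2^{a−1}y (mod 2^a)) hold if and only if: either y is even and y₂ ≡ 1 (mod 2^{a−e}), or e ≤ a−2, y is odd and v₂(y₂ − 1) = a − e − 1. -/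
/-!
Since `y₂ - 1` is even, lifting the exponent gives
`v₂((2^e - 1)^(y₂ - 1) - 1) = e + v₂(y₂ - 1)`. Modulo `2^a`, the right-hand side `2^(a-1) y` is
`0` or `2^(a-1)` according to the parity of `y`, so the congruence says either
`a ≤ e + v₂(y₂ - 1)` (for even `y`) or `e + v₂(y₂ - 1) = a - 1` (for odd `y`), and
`v₂(y₂ - 1) ≥ 1` turns the latter into `e ≤ a - 2` and `v₂(y₂ - 1) = a - e - 1`.
-/

theorem emultiplicity_two_pow_mul_of_odd (k : ℕ) {u : ℤ} (hu : Odd u) :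
    emultiplicity 2 (2 ^ k * u) = k := by
  rw [emultiplicity_mul Int.prime_two, emultiplicity_pow_self_of_prime Int.prime_two,
    emultiplicity_eq_zero.mpr fun h ↦ Int.not_even_iff_odd.mpr hu (even_iff_two_dvd.mpr h),
    add_zero]

theorem two_pow_dvd_sub_two_pow_pred_iff {a : ℕ} (ha : 1 ≤ a) (z : ℤ) :
    2 ^ a ∣ z - 2 ^ (a - 1) ↔ emultiplicity 2 z = (a - 1 : ℕ) := by
  have h2a : (2 : ℤ) ^ a = 2 ^ (a - 1) * 2 := by rw [← pow_succ, Nat.sub_add_cancel ha]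
  constructor
  · rintro ⟨t, ht⟩
    rw [show z = 2 ^ (a - 1) * (2 * t + 1) by rw [h2a] at ht; linarith]
    exact emultiplicity_two_pow_mul_of_odd _ (odd_two_mul_add_one t)
  · intro h
    obtain ⟨⟨u, rfl⟩, hndvd⟩ := emultiplicity_eq_coe.mp h
    rw [Nat.sub_add_cancel ha, h2a, mul_dvd_mul_iff_left (by positivity)] at hndvd
    obtain ⟨w, rfl⟩ := Int.not_even_iff_odd.mp (hndvd ∘ Even.two_dvd)
    exact ⟨w, by rw [h2a]; ring⟩

theorem two_pow_dvd_sub_two_pow_pred_mul_iff {a : ℕ} (ha : 1 ≤ a) (z y : ℤ) :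
    2 ^ a ∣ z - 2 ^ (a - 1) * y ↔
      (Even y ∧ 2 ^ a ∣ z) ∨ (Odd y ∧ emultiplicity 2 z = (a - 1 : ℕ)) := by
  have h2a : (2 : ℤ) ^ a = 2 ^ (a - 1) * 2 := by rw [← pow_succ, Nat.sub_add_cancel ha]
  rcases Int.even_or_odd' y with ⟨k, rfl | rfl⟩
  · rw [show (2 : ℤ) ^ (a - 1) * (2 * k) = 2 ^ a * k by rw [h2a]; ring,
      dvd_sub_left (dvd_mul_right _ _)]
    simp [Int.not_odd_iff_even.mpr (even_two_mul k)]
  · rw [show z - 2 ^ (a - 1) * (2 * k + 1) = z - 2 ^ (a - 1) - 2 ^ a * k by rw [h2a]; ring,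
      dvd_sub_left (dvd_mul_right _ _), two_pow_dvd_sub_two_pow_pred_iff ha]
    simp [Int.not_even_iff_odd.mpr (odd_two_mul_add_one k)]

theorem emultiplicity_two_pow_sub_one_pow_sub_one {e n : ℕ} (he : 2 ≤ e) (hn : Even n) :
    emultiplicity 2 (((2 : ℤ) ^ e - 1) ^ n - 1) = e + emultiplicity (2 : ℤ) n := by
  have h4 : (4 : ℤ) ∣ 2 ^ e := by
    obtain ⟨k, rfl⟩ := Nat.exists_eq_add_of_le he
    exact ⟨2 ^ k, by ring⟩
  have hodd : ¬ 2 ∣ 1 - (2 : ℤ) ^ e := by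
    rw [← even_iff_two_dvd, Int.not_even_iff_odd]
    exact odd_one.sub_even (even_two.pow_of_ne_zero (by omega))
  -- for even `n`, `(2^e - 1)^n = (1 - 2^e)^n` and `1 - 2^e ≡ 1 [ZMOD 4]`
  have := Int.two_pow_sub_pow' (x := 1 - 2 ^ e) (y := 1) n (by simpa using h4) hodd
  rwa [one_pow, sub_sub_cancel_left, emultiplicity_neg,
    emultiplicity_pow_self_of_prime Int.prime_two, ← hn.neg_pow, neg_sub] at this

theorem ENat.natCast_add_eq_natCast_iff {k n : ℕ} {v : ℕ∞} :
    (k : ℕ∞) + v = n ↔ k ≤ n ∧ v = (n - k : ℕ) := by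
  induction v using ENat.recTopCoe with
  | top => simp only [add_top, (ENat.natCast_ne_top _).symm, and_false]
  | coe m => norm_cast; omega

theorem typeII_conditions_iff_general (a e : ℕ) (he1 : 1 < e) (hea : e < a)
    (y : ℤ) (y₂ : ℕ) (hy₂ : Odd y₂) :
    (((2 : ℤ) ^ e - 1) ^ (y₂ - 1) - 1 ≡ 2 ^ (a - 1) * y [ZMOD 2 ^ a]) ↔
    ((Even y ∧ (y₂ : ℤ) ≡ 1 [ZMOD 2 ^ (a - e)]) ∨
      (e ≤ a - 2 ∧ Odd y ∧ emultiplicity 2 ((y₂ : ℤ) - 1) = ((a - e - 1 : ℕ) : ℕ∞))) := by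
  have hcast : ((y₂ - 1 : ℕ) : ℤ) = y₂ - 1 := by push_cast [hy₂.pos]; rfl
  have hv1 : 1 ≤ emultiplicity 2 ((y₂ : ℤ) - 1) := by
    simpa using le_emultiplicity_of_pow_dvd (k := 1)
      (by simpa using ((hy₂.natCast (R := ℤ)).sub_odd odd_one).two_dvd)
  rw [Int.modEq_comm, Int.modEq_iff_dvd, two_pow_dvd_sub_two_pow_pred_mul_iff (by omega),
    pow_dvd_iff_le_emultiplicity, emultiplicity_two_pow_sub_one_pow_sub_one he1
      (Nat.Odd.sub_odd hy₂ odd_one), hcast]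
  rw [Int.modEq_comm, Int.modEq_iff_dvd, pow_dvd_iff_le_emultiplicity, ← tsub_le_iff_left,
    ← ENat.natCast_sub, ENat.natCast_add_eq_natCast_iff, Nat.sub_right_comm]
  refine or_congr Iff.rfl ⟨fun ⟨hy, _, hv⟩ ↦ ⟨?_, hy, hv⟩, fun ⟨he, hy, hv⟩ ↦ ⟨hy, by omega, hv⟩⟩
  rw [hv, Nat.one_le_cast] at hv1
  omega

/-- Lemma 2.4: for `H_II(a,b,e)` parameters (`max{1, a-b} < e < min{a,b}`), `r = 2^e - 1`,
`y₁ = 2^(b-1) y`, and `y₂` odd, the automorphism condition `r^(y₂-1) - 1 ≡ 2^(a-1) y (mod 2^a)`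
holds iff either `y` is even and `y₂ ≡ 1 (mod 2^(a-e))`, or `e ≤ a - 2`, `y` is odd and
`v₂(y₂ - 1) = a - e - 1`. -/
theorem typeII_conditions_iff (a b e : ℕ) (he1 : 1 < e) (habe : a - b < e) (hea : e < a)
    (heb : e < b) (y : ℤ) (y₂ : ℕ) (hy₂ : Odd y₂) :
    (((2 : ℤ) ^ e - 1) ^ (y₂ - 1) - 1 ≡ 2 ^ (a - 1) * y [ZMOD 2 ^ a]) ↔
    ((Even y ∧ (y₂ : ℤ) ≡ 1 [ZMOD 2 ^ (a - e)]) ∨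
      (e ≤ a - 2 ∧ Odd y ∧ emultiplicity 2 ((y₂ : ℤ) - 1) = ((a - e - 1 : ℕ) : ℕ∞))) :=
  typeII_conditions_iff_general a e he1 hea y y₂ hy₂
end
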